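/- Let m ≥ 2 and r ≥ 4 be integers, let N ≤ r, and let A_1, …, A_N be subsets of [m] such that every element j ∈ [m] belongs to A_i for at least two indices i (i.e. the family is a double cover of [m]). Then the number of pairs 1 ≤ i < j ≤ N with A_i ∩ A_j ≠ ∅ is at most λ(r)·(Σ_{i=1}^N |A_i| − 2m) + m. -/

import Mathlib

/-- `λ(r) = (C(r,2) - 2)/(r - 2)`. -/
noncomputable def lam (r : ℕ) : ℝ := ((r.choose 2 : ℝ) - 2) / ((r : ℝ) - 2)

/-!
Count the intersecting pairs through their common elements: a pair meeting in `j` is one of the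
`C(d_j, 2)` pairs of sets containing `j`, where `d_j ≥ 2` is the degree of `j`. If every degree
is at most `r - 1`, then convexity of `d ↦ C(d, 2)` puts it below the line `λ(r)(d - 2) + 1` on
`[2, r - 1]`, and summing over `j` gives the bound since `∑ (d_j - 2) = ∑ |A_i| - 2m`. Otherwise
some element lies in all `N = r` sets, so `∑ (d_j - 2) ≥ r - 2` and the bound is at least
`λ(r)(r - 2) + m = C(r, 2) - 2 + m ≥ C(r, 2)`, which bounds the number of all pairs.
-/

open Finset

lemma lam_pos {r : ℕ} (hr : 3 ≤ r) : 0 < lam r := by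
  have hr' : (3 : ℝ) ≤ r := by exact_mod_cast hr
  unfold lam
  rw [Nat.cast_choose_two]
  apply div_pos <;> nlinarith

lemma lam_mul_sub_two {r : ℕ} (hr : r ≠ 2) : lam r * ((r : ℝ) - 2) = (r.choose 2 : ℝ) - 2 := by
  have : (r : ℝ) - 2 ≠ 0 := sub_ne_zero.2 (by exact_mod_cast hr)
  rw [lam, div_mul_cancel₀ _ this]

lemma choose_two_le_lam_mul_add_one {r d : ℕ} (hr : 4 ≤ r) (hd₂ : 2 ≤ d) (hdr : d < r) :
    (d.choose 2 : ℝ) ≤ lam r * ((d : ℝ) - 2) + 1 := by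
  have hr' : (4 : ℝ) ≤ r := by exact_mod_cast hr
  have hd₂' : (2 : ℝ) ≤ d := by exact_mod_cast hd₂
  have hdr' : (d : ℝ) + 1 ≤ r := by exact_mod_cast hdr
  rw [lam, Nat.cast_choose_two, Nat.cast_choose_two, div_mul_eq_mul_div, ← sub_le_iff_le_add,
    le_div_iff₀ (by linarith)]
  nlinarith [mul_nonneg (sub_nonneg.2 hd₂') (sub_nonneg.2 hdr')]

section Family

variable {ι α : Type*} [Fintype ι] [Fintype α] [DecidableEq α]

def indicesContaining (A : ι → Finset α) (j : α) : Finset ι := {i | j ∈ A i}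

def coverDegree (A : ι → Finset α) (j : α) : ℕ := #(indicesContaining A j)

lemma sum_coverDegree (A : ι → Finset α) : ∑ j, coverDegree A j = ∑ i, #(A i) := by
  simp_rw [coverDegree, indicesContaining, card_filter]
  rw [sum_comm]
  simp

lemma sum_card_sub_two_mul_card (A : ι → Finset α) :
    ∑ i, (#(A i) : ℝ) - 2 * Fintype.card α = ∑ j, ((coverDegree A j : ℝ) - 2) := by
  have hsum : ∑ j, (coverDegree A j : ℝ) = ∑ i, (#(A i) : ℝ) := by
    exact_mod_cast sum_coverDegree A
  rw [sum_sub_distrib, hsum]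
  simp [mul_comm]

variable [LinearOrder ι]

def intersectingPairs (A : ι → Finset α) : Finset (ι × ι) :=
  {ij | ij.1 < ij.2 ∧ (A ij.1 ∩ A ij.2).Nonempty}

lemma card_intersectingPairs_le_sum_choose_two (A : ι → Finset α) :
    #(intersectingPairs A) ≤ ∑ j, (coverDegree A j).choose 2 := by
  set s := indicesContaining A
  calc #(intersectingPairs A)
      ≤ #(univ.biUnion fun j => {ij ∈ s j ×ˢ s j | ij.1 < ij.2}) := by
        refine card_le_card fun ij hij => ?_
        obtain ⟨hlt, j, hj⟩ := (mem_filter.1 hij).2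
        rw [mem_inter] at hj
        simp only [mem_biUnion, mem_univ, true_and, mem_filter, mem_product, s, indicesContaining]
        exact ⟨j, hj, hlt⟩
    _ ≤ ∑ j, #{ij ∈ s j ×ˢ s j | ij.1 < ij.2} := card_biUnion_le
    _ = ∑ j, (coverDegree A j).choose 2 := by simp_rw [card_product_filter_lt]; rfl

omit [Fintype α] in
lemma card_intersectingPairs_le_choose_two (A : ι → Finset α) :
    #(intersectingPairs A) ≤ (Fintype.card ι).choose 2 :=
  (card_le_card fun _ h => mem_filter.2 ⟨mem_univ _, (mem_filter.1 h).2.1⟩).trans_eq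
    Fintype.card_product_filter_lt

theorem card_intersectingPairs_le_of_coverDegree_lt {r : ℕ} (hr : 4 ≤ r) (A : ι → Finset α)
    (hcover : ∀ j, 2 ≤ coverDegree A j) (hlt : ∀ j, coverDegree A j < r) :
    (#(intersectingPairs A) : ℝ) ≤
      lam r * (∑ i, (#(A i) : ℝ) - 2 * Fintype.card α) + Fintype.card α := by
  calc (#(intersectingPairs A) : ℝ)
      ≤ ∑ j, ((coverDegree A j).choose 2 : ℝ) := by
        exact_mod_cast card_intersectingPairs_le_sum_choose_two A
    _ ≤ ∑ j, (lam r * ((coverDegree A j : ℝ) - 2) + 1) :=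
        sum_le_sum fun j _ => choose_two_le_lam_mul_add_one hr (hcover j) (hlt j)
    _ = lam r * (∑ i, (#(A i) : ℝ) - 2 * Fintype.card α) + Fintype.card α := by
        rw [sum_card_sub_two_mul_card, sum_add_distrib, mul_sum]
        simp

theorem card_intersectingPairs_le_of_le_coverDegree {r : ℕ} (hr : 4 ≤ r)
    (hα : 2 ≤ Fintype.card α) (hι : Fintype.card ι ≤ r) (A : ι → Finset α)
    (hcover : ∀ j, 2 ≤ coverDegree A j) (j₀ : α) (hj₀ : r ≤ coverDegree A j₀) :
    (#(intersectingPairs A) : ℝ) ≤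
      lam r * (∑ i, (#(A i) : ℝ) - 2 * Fintype.card α) + Fintype.card α := by
  have hexcess : (r : ℝ) - 2 ≤ ∑ i, (#(A i) : ℝ) - 2 * Fintype.card α := by
    rw [sum_card_sub_two_mul_card]
    calc (r : ℝ) - 2 ≤ (coverDegree A j₀ : ℝ) - 2 := by gcongr
      _ ≤ ∑ j, ((coverDegree A j : ℝ) - 2) :=
        single_le_sum (f := fun j => (coverDegree A j : ℝ) - 2)
          (fun j _ => sub_nonneg.2 (by exact_mod_cast hcover j)) (mem_univ j₀)
  have hα' : (2 : ℝ) ≤ Fintype.card α := by exact_mod_cast hα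
  calc (#(intersectingPairs A) : ℝ) ≤ r.choose 2 := by
        exact_mod_cast (card_intersectingPairs_le_choose_two A).trans (Nat.choose_le_choose 2 hι)
    _ = lam r * ((r : ℝ) - 2) + 2 := by rw [lam_mul_sub_two (by omega)]; ring
    _ ≤ lam r * (∑ i, (#(A i) : ℝ) - 2 * Fintype.card α) + Fintype.card α :=
        add_le_add (mul_le_mul_of_nonneg_left hexcess (lam_pos (by omega)).le) hα'

end Family

theorem double_cover_intersecting_pairs (m r N : ℕ) (hm : 2 ≤ m) (hr : 4 ≤ r)
    (hN : N ≤ r) (A : Fin N → Finset (Fin m))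
    (hcover : ∀ j : Fin m, 2 ≤ (Finset.univ.filter (fun i => j ∈ A i)).card) :
    ((Finset.univ.filter
        (fun ij : Fin N × Fin N => ij.1 < ij.2 ∧ (A ij.1 ∩ A ij.2).Nonempty)).card : ℝ)
      ≤ lam r * ((∑ i, ((A i).card : ℝ)) - 2 * m) + m := by
  by_cases hlt : ∀ j, coverDegree A j < r
  · have h := card_intersectingPairs_le_of_coverDegree_lt hr A hcover hlt
    rwa [Fintype.card_fin] at h
  · push Not at hlt
    obtain ⟨j₀, hj₀⟩ := hlt
    have h := card_intersectingPairs_le_of_le_coverDegree hr (by simpa) (by simpa) A hcover j₀ hj₀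
    rwa [Fintype.card_fin] at h
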